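/- Let μ be a positive real number and a, b positive integers. For any fixed sequence of a votes for A and b votes for B, at least ⌊a - μb + 1⌋ of its a+b cyclic permutations satisfy a_r ≥ μ·b_r for all r (provided a ≥ μb). -/

import Mathlib

/-!
Give an A-vote weight `1` and a B-vote weight `-μ`, extend the sequence periodically and let `S`
be its partial sums; shift `i` is good iff `S i ≤ S j` for all `j ≥ i`. Since the drift
`T = S n = a - μ b` over a period is nonnegative, `M i = min_{j ≥ i} S j` is already the minimum
over `[i, i + n]`; it is nondecreasing with `M (i + n) = M i + T`. It stays constant past a bad
shift and rises by at most `1` past a good one, strictly less than `1` when the next shift is bad.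
A shift starting with a B-vote is bad, so such a good shift exists, and summing the increments of
`M` over one period gives `T < #good`, i.e. `⌊T⌋ + 1 ≤ #good`.
-/

/-- Number of A-votes (true) among the first `r` positions. -/
def countA (n : ℕ) (v : Fin n → Bool) (r : ℕ) : ℕ :=
  (Finset.univ.filter (fun i : Fin n => i.val < r ∧ v i = true)).card

/-- Number of B-votes (false) among the first `r` positions. -/
def countB (n : ℕ) (v : Fin n → Bool) (r : ℕ) : ℕ :=
  (Finset.univ.filter (fun i : Fin n => i.val < r ∧ v i = false)).card

/-- Cyclic permutation moving the first `i` votes to the end. -/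
def cyc {n : ℕ} (v : Fin n → Bool) (i : ℕ) : Fin n → Bool :=
  fun j => v ⟨(j.val + i) % n, Nat.mod_lt _ (Nat.lt_of_le_of_lt (Nat.zero_le j.val) j.isLt)⟩

open Finset

lemma Nat.exists_le_lt_and_not_succ {P : ℕ → Prop} {m q : ℕ} (hm : P m) (hq : ¬P q)
    (hmq : m ≤ q) : ∃ i, m ≤ i ∧ i < q ∧ P i ∧ ¬P (i + 1) := by
  by_contra! h
  have hP : ∀ d, m + d ≤ q → P (m + d) := by
    intro d
    induction d with
    | zero => exact fun _ => hm
    | succ d ih => exact fun hd => h (m + d) (by omega) (by omega) (ih (by omega))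
  exact hq (by simpa [Nat.add_sub_cancel' hmq] using hP (q - m) (by omega))

def partialSum (w : ℕ → ℝ) (m : ℕ) : ℝ := ∑ j ∈ range m, w j

def IsGoodShift (w : ℕ → ℝ) (n i : ℕ) : Prop := ∀ r ≤ n, partialSum w i ≤ partialSum w (i + r)

def minAhead (w : ℕ → ℝ) (n i : ℕ) : ℝ :=
  (range (n + 1)).inf' nonempty_range_add_one fun r => partialSum w (i + r)

section PeriodicWalk

variable {w : ℕ → ℝ} {n : ℕ}

@[simp]
lemma partialSum_zero (w : ℕ → ℝ) : partialSum w 0 = 0 := sum_range_zero w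

lemma partialSum_succ (w : ℕ → ℝ) (m : ℕ) : partialSum w (m + 1) = partialSum w m + w m :=
  sum_range_succ w m

lemma partialSum_add_period (hw : Function.Periodic w n) (m : ℕ) :
    partialSum w (m + n) = partialSum w m + partialSum w n := by
  simp only [partialSum, add_comm m n, sum_range_add, add_comm (∑ j ∈ range n, w j)]
  exact congrArg (· + _) (sum_congr rfl fun x _ => by rw [add_comm, hw])

lemma exists_partialSum_eq_minAhead (w : ℕ → ℝ) (n i : ℕ) :
    ∃ r ≤ n, partialSum w (i + r) = minAhead w n i := by
  obtain ⟨r, hr, h⟩ := exists_mem_eq_inf' (nonempty_range_add_one (n := n))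
    fun r => partialSum w (i + r)
  exact ⟨r, Nat.lt_succ_iff.mp (mem_range.mp hr), h.symm⟩

lemma minAhead_le_partialSum_add_of_le {i r : ℕ} (hr : r ≤ n) :
    minAhead w n i ≤ partialSum w (i + r) :=
  inf'_le _ (mem_range.mpr (Nat.lt_succ_of_le hr))

lemma isGoodShift_iff_minAhead_eq {i : ℕ} :
    IsGoodShift w n i ↔ minAhead w n i = partialSum w i := by
  refine ⟨fun h => le_antisymm ?_ (le_inf' _ _ fun r hr => h r ?_), fun h r hr => ?_⟩
  · simpa using minAhead_le_partialSum_add_of_le (w := w) (i := i) (Nat.zero_le n)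
  · exact Nat.lt_succ_iff.mp (mem_range.mp hr)
  · exact h ▸ minAhead_le_partialSum_add_of_le hr

lemma minAhead_le_partialSum_add (hn : 0 < n) (hw : Function.Periodic w n)
    (hT : 0 ≤ partialSum w n) (i r : ℕ) : minAhead w n i ≤ partialSum w (i + r) := by
  induction r using Nat.strong_induction_on with
  | _ r ih =>
    by_cases hr : r ≤ n
    · exact minAhead_le_partialSum_add_of_le hr
    · have h := partialSum_add_period hw (i + (r - n))
      rw [show i + (r - n) + n = i + r by omega] at h
      linarith [ih (r - n) (by omega)]

lemma minAhead_le_minAhead_succ (hn : 0 < n) (hw : Function.Periodic w n)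
    (hT : 0 ≤ partialSum w n) (i : ℕ) : minAhead w n i ≤ minAhead w n (i + 1) := by
  obtain ⟨r, -, hr⟩ := exists_partialSum_eq_minAhead w n (i + 1)
  rw [← hr, add_assoc]
  exact minAhead_le_partialSum_add hn hw hT i (1 + r)

lemma minAhead_succ_of_not_isGoodShift {i : ℕ} (hn : 0 < n) (hw : Function.Periodic w n)
    (hT : 0 ≤ partialSum w n) (hi : ¬IsGoodShift w n i) :
    minAhead w n (i + 1) = minAhead w n i := by
  refine le_antisymm ?_ (minAhead_le_minAhead_succ hn hw hT i)
  obtain ⟨r, hrn, hr⟩ := exists_partialSum_eq_minAhead w n i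
  obtain _ | r := r
  · exact absurd (isGoodShift_iff_minAhead_eq.mpr hr.symm) hi
  · rw [← hr, add_comm r 1, ← add_assoc]
    exact minAhead_le_partialSum_add_of_le (by omega)

lemma minAhead_succ_le_of_isGoodShift {i : ℕ} (hw₁ : ∀ j, w j ≤ 1) (hi : IsGoodShift w n i) :
    minAhead w n (i + 1) ≤ minAhead w n i + 1 := by
  have := minAhead_le_partialSum_add_of_le (w := w) (i := i + 1) (Nat.zero_le n)
  rw [isGoodShift_iff_minAhead_eq.mp hi]
  linarith [partialSum_succ w i, hw₁ i]

lemma minAhead_succ_lt_of_isGoodShift {i : ℕ} (hw₁ : ∀ j, w j ≤ 1) (hi : IsGoodShift w n i)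
    (hi' : ¬IsGoodShift w n (i + 1)) : minAhead w n (i + 1) < minAhead w n i + 1 := by
  have := minAhead_le_partialSum_add_of_le (w := w) (i := i + 1) (Nat.zero_le n)
  have := Ne.lt_of_le (mt isGoodShift_iff_minAhead_eq.mpr hi') (by simpa using this)
  rw [isGoodShift_iff_minAhead_eq.mp hi]
  linarith [partialSum_succ w i, hw₁ i]

lemma minAhead_add_period (hw : Function.Periodic w n) (i : ℕ) :
    minAhead w n (i + n) = minAhead w n i + partialSum w n := by
  obtain ⟨r, hrn, hr⟩ := exists_partialSum_eq_minAhead w n i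
  obtain ⟨s, hsn, hs⟩ := exists_partialSum_eq_minAhead w n (i + n)
  have h₁ := minAhead_le_partialSum_add_of_le (w := w) (i := i + n) hrn
  have h₂ := minAhead_le_partialSum_add_of_le (w := w) (i := i) hsn
  rw [add_right_comm, partialSum_add_period hw] at h₁
  rw [add_right_comm, partialSum_add_period hw] at hs
  linarith

lemma isGoodShift_periodic (hw : Function.Periodic w n) :
    Function.Periodic (IsGoodShift w n) n := fun i => by
  simp only [isGoodShift_iff_minAhead_eq, minAhead_add_period hw, partialSum_add_period hw,
    add_left_inj]

lemma exists_isGoodShift_not_isGoodShift_succ (hw : Function.Periodic w n)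
    (hT : 0 ≤ partialSum w n) (hneg : ∃ p < n, w p < 0) :
    ∃ i < n, IsGoodShift w n i ∧ ¬IsGoodShift w n (i + 1) := by
  obtain ⟨p, hpn, hp⟩ := hneg
  have hn : 0 < n := by omega
  obtain ⟨r, -, hr⟩ := exists_partialSum_eq_minAhead w n 0
  rw [zero_add] at hr
  have hgood : IsGoodShift w n r := fun s _ => by
    rw [hr]
    simpa using minAhead_le_partialSum_add hn hw hT 0 (r + s)
  have hbad : ¬IsGoodShift w n (p + r * n) := fun h => by
    have := h 1 hn
    have hwp : w (p + r * n) = w p := by simpa using hw.nat_mul r p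
    rw [partialSum_succ, hwp] at this
    linarith
  obtain ⟨i, -, -, hi, hi'⟩ := Nat.exists_le_lt_and_not_succ hgood hbad (by nlinarith)
  have hgp := isGoodShift_periodic hw
  refine ⟨i % n, Nat.mod_lt i hn, by rwa [hgp.map_mod_nat], ?_⟩
  rwa [← hgp.map_mod_nat, Nat.mod_add_mod, hgp.map_mod_nat]

lemma partialSum_lt_card_isGoodShift [DecidablePred (IsGoodShift w n)]
    (hw : Function.Periodic w n) (hw₁ : ∀ j, w j ≤ 1) (hT : 0 ≤ partialSum w n)
    (hneg : ∃ p < n, w p < 0) :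
    partialSum w n < #{i ∈ range n | IsGoodShift w n i} := by
  obtain ⟨i, hin, hi, hi'⟩ := exists_isGoodShift_not_isGoodShift_succ hw hT hneg
  have hn : 0 < n := by omega
  calc partialSum w n = ∑ j ∈ range n, (minAhead w n (j + 1) - minAhead w n j) := by
        have h := minAhead_add_period hw 0
        rw [zero_add] at h
        rw [sum_range_sub, h]
        ring
    _ < ∑ j ∈ range n, if IsGoodShift w n j then (1 : ℝ) else 0 := by
        refine sum_lt_sum (fun j _ => ?_) ⟨i, mem_range.mpr hin, ?_⟩
        · split_ifs with hj
          · linarith [minAhead_succ_le_of_isGoodShift hw₁ hj]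
          · rw [minAhead_succ_of_not_isGoodShift hn hw hT hj, sub_self]
        · rw [if_pos hi]
          linarith [minAhead_succ_lt_of_isGoodShift hw₁ hi hi']
    _ = #{i ∈ range n | IsGoodShift w n i} := by rw [sum_boole]

end PeriodicWalk

section Votes
variable {n : ℕ}

lemma countA_add_countB_self (f : Fin n → Bool) : countA n f n + countB n f n = n := by
  simp only [countA, countB, Fin.is_lt, true_and, Bool.eq_false_iff]
  rw [card_filter_add_card_filter_not, card_univ, Fintype.card_fin]

lemma countA_sub_mul_countB (μ : ℝ) (f : Fin n → Bool) (r : ℕ) :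
    (countA n f r : ℝ) - μ * countB n f r =
      ∑ j : Fin n with j.val < r, if f j then 1 else -μ := by
  rw [sum_ite, sum_const, sum_const, filter_filter, filter_filter]
  simp [countA, countB, sub_eq_add_neg, mul_comm]

variable [NeZero n]

def voteWeight (μ : ℝ) (v : Fin n → Bool) (j : ℕ) : ℝ := if v (Fin.ofNat n j) then 1 else -μ

lemma voteWeight_periodic (μ : ℝ) (v : Fin n → Bool) : Function.Periodic (voteWeight μ v) n :=
  fun j => by
    have h : Fin.ofNat n (j + n) = Fin.ofNat n j := Fin.ext (by simp)
    simp only [voteWeight, h]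

lemma cyc_apply (v : Fin n → Bool) (i : ℕ) (j : Fin n) : cyc v i j = v (Fin.ofNat n (i + j)) := by
  simp only [cyc]; congr 1; ext; simp [add_comm]

lemma countA_sub_mul_countB_cyc (μ : ℝ) (v : Fin n → Bool) (i : ℕ) {r : ℕ} (hr : r ≤ n) :
    (countA n (cyc v i) r : ℝ) - μ * countB n (cyc v i) r =
      partialSum (voteWeight μ v) (i + r) - partialSum (voteWeight μ v) i := by
  have hrange : (range n).filter (· < r) = range r := by ext; simp; omega
  rw [countA_sub_mul_countB, partialSum, partialSum, sum_range_add, add_sub_cancel_left,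
    ← hrange, sum_filter, sum_filter,
    ← Fin.sum_univ_eq_sum_range fun j => if j < r then voteWeight μ v (i + j) else 0]
  simp [cyc_apply, voteWeight]

lemma cyc_zero (v : Fin n → Bool) : cyc v 0 = v := by
  funext j
  simp [cyc_apply]

lemma isGoodShift_voteWeight_iff (μ : ℝ) (v : Fin n → Bool) (i : ℕ) :
    IsGoodShift (voteWeight μ v) n i ↔
      ∀ r, 1 ≤ r → r ≤ n → μ * (countB n (cyc v i) r : ℝ) ≤ countA n (cyc v i) r := by
  refine ⟨fun h r _ hr => ?_, fun h r hr => ?_⟩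
  · linarith [h r hr, countA_sub_mul_countB_cyc μ v i hr]
  · obtain rfl | hr₁ := Nat.eq_zero_or_pos r
    · exact le_rfl
    · linarith [h r hr₁ hr, countA_sub_mul_countB_cyc μ v i hr]

end Votes

open Classical in
theorem cyclic_weak_count_general (μ : ℝ) (a b : ℕ) (hμ : 0 < μ) (hb : 0 < b)
    (hab : μ * b ≤ a) (v : Fin (a + b) → Bool) (hA : countA (a + b) v (a + b) = a) :
    (⌊(a : ℝ) - μ * b + 1⌋ : ℤ) ≤
      ((Finset.range (a + b)).filter (fun i =>
        ∀ r, 1 ≤ r → r ≤ a + b →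
          μ * (countB (a + b) (cyc v i) r : ℝ) ≤ (countA (a + b) (cyc v i) r : ℝ))).card := by
  have : NeZero (a + b) := ⟨by omega⟩
  have hB : countB (a + b) v (a + b) = b := by
    have := countA_add_countB_self v
    omega
  have hT : partialSum (voteWeight μ v) (a + b) = a - μ * b := by
    simpa [cyc_zero, hA, hB] using (countA_sub_mul_countB_cyc μ v 0 le_rfl).symm
  have hw₁ : ∀ j, voteWeight μ v j ≤ 1 := fun j => by
    unfold voteWeight
    split_ifs <;> linarith
  have hneg : ∃ p < a + b, voteWeight μ v p < 0 := by
    obtain ⟨p, hp⟩ := card_pos.mp (show 0 < countB (a + b) v (a + b) by omega)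
    refine ⟨p, p.isLt, ?_⟩
    simp_all [voteWeight]
  simp only [← isGoodShift_voteWeight_iff μ v]
  rw [Int.floor_add_one, Int.add_one_le_iff, Int.floor_lt, ← hT]
  exact_mod_cast partialSum_lt_card_isGoodShift (voteWeight_periodic μ v) hw₁
    (by rw [hT]; linarith) hneg

open Classical in
theorem cyclic_weak_count (μ : ℝ) (a b : ℕ) (hμ : 0 < μ) (ha : 0 < a) (hb : 0 < b)
    (hab : μ * b ≤ a) (v : Fin (a + b) → Bool) (hA : countA (a + b) v (a + b) = a) :
    (⌊(a : ℝ) - μ * b + 1⌋ : ℤ) ≤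
      ((Finset.range (a + b)).filter (fun i =>
        ∀ r, 1 ≤ r → r ≤ a + b →
          μ * (countB (a + b) (cyc v i) r : ℝ) ≤ (countA (a + b) (cyc v i) r : ℝ))).card :=
  cyclic_weak_count_general μ a b hμ hb hab v hA
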